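/- arXiv:2507.17350 — 2 statements merged into one kernel-verified Lean document; each statement's English description precedes it below -/
import Mathlib

section
/- Let d ≥ 1, D ∈ ℝ^{d×d}, let γ : (0,∞) → ℝ^{d×d} be Bochner integrable, and let r be the differential resolvent of γ with drift matrix D; assume that r is Bochner integrable on (0,∞). Let f : ℝ → ℝ^d be bounded and continuous. Then v(t) = ∫_{−∞}^t r(t−τ) f(τ) dτ defines a bounded continuously differentiable function v : ℝ → ℝ^d satisfying v′(t) = −D v(t) − ∫_{−∞}^t γ(t−s) v(s) ds + f(t) for all t ∈ ℝ. -/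
/-!
Extend `γ`, `r` and `r'` by zero to all of `ℝ` (written `γ₀`, `r₀`, `r'₀`). Then `v = r₀ ⋆ f` is
the convolution of an integrable kernel with a bounded continuous function, hence bounded and
continuous. Away from the origin `r₀` is differentiable with derivative `r'₀`, and at the origin it
jumps by `r 0 = 1`; integrating `r₀ (b - τ) - r₀ (a - τ)` against `f τ` and swapping the integrals
gives `v b - v a = ∫ u in a..b, (f u + (r'₀ ⋆ f) u)`, so `v' = f + r'₀ ⋆ f`. Finally the resolvent
equation reads `r'₀ = -D r₀ - γ₀ ⋆ r₀`, and associativity of convolution turns `r'₀ ⋆ f` into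
`-D v - γ₀ ⋆ v`.
-/

open MeasureTheory Matrix Set Filter
open scoped Matrix.Norms.L2Operator Real Topology ComplexOrder

noncomputable section

/-- `r` (with derivative `r'`) is the differential resolvent of the kernel `γ` with drift
matrix `D`: `r` is continuously differentiable on `[0,∞)`, `r(0) = I`, and
`r′(t) = -D r(t) - ∫₀ᵗ γ(t-s) r(s) ds = -r(t) D - ∫₀ᵗ r(t-s) γ(s) ds` for all `t ≥ 0`. -/
structure IsDiffResolvent {d : ℕ} (D : Matrix (Fin d) (Fin d) ℝ)
    (γ r r' : ℝ → Matrix (Fin d) (Fin d) ℝ) : Prop where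
  init : r 0 = 1
  hasDeriv : ∀ t ∈ Ici (0 : ℝ), HasDerivWithinAt r (r' t) (Ici 0) t
  contDeriv : ContinuousOn r' (Ici 0)
  eq_left : ∀ t ∈ Ici (0 : ℝ), r' t = -(D * r t) - ∫ s in (0 : ℝ)..t, γ (t - s) * r s
  eq_right : ∀ t ∈ Ici (0 : ℝ), r' t = -(r t * D) - ∫ s in (0 : ℝ)..t, r (t - s) * γ s

open scoped Convolution
open ContinuousLinearMap (mul)

namespace MeasureTheory.Integrable

variable {E E' E'' F F' F'' : Type*} [NormedAddCommGroup E] [NormedSpace ℝ E]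
  [NormedAddCommGroup E'] [NormedSpace ℝ E'] [NormedAddCommGroup E''] [NormedSpace ℝ E'']
  [NormedAddCommGroup F] [NormedSpace ℝ F] [NormedAddCommGroup F'] [NormedSpace ℝ F']
  [NormedAddCommGroup F''] [NormedSpace ℝ F'']
  (L : E →L[ℝ] E' →L[ℝ] F) {g : ℝ → E} {k : ℝ → E'} {C : ℝ}

theorem convolutionExistsAt_of_norm_le (hg : Integrable g) (hk : AEStronglyMeasurable k)
    (hkC : ∀ x, ‖k x‖ ≤ C) (x : ℝ) : ConvolutionExistsAt g k x L :=
  ((hg.norm.const_mul ‖L‖).mul_const C).mono'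
    (hg.aestronglyMeasurable.convolution_integrand_snd L hk x)
    (ae_of_all _ fun _ => L.le_of_opNorm₂_le_of_le le_rfl le_rfl (hkC _))

theorem norm_convolution_le (hg : Integrable g) (hkC : ∀ x, ‖k x‖ ≤ C) (x : ℝ) :
    ‖(g ⋆[L] k) x‖ ≤ ‖L‖ * (∫ t, ‖g t‖) * C := by
  rw [convolution_def, ← integral_const_mul, ← integral_mul_const]
  exact norm_integral_le_of_norm_le ((hg.norm.const_mul _).mul_const _)
    (ae_of_all _ fun _ => L.le_of_opNorm₂_le_of_le le_rfl le_rfl (hkC _))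

theorem continuous_convolution_of_norm_le (hg : Integrable g) (hk : Continuous k)
    (hkC : ∀ x, ‖k x‖ ≤ C) : Continuous (g ⋆[L] k) :=
  BddAbove.continuous_convolution_right_of_integrable L
    ⟨C, by rintro _ ⟨x, rfl⟩; exact hkC x⟩ hg hk

theorem convolution_assoc_of_norm_le [CompleteSpace F] [CompleteSpace F'] [CompleteSpace F'']
    (L₂ : F →L[ℝ] E'' →L[ℝ] F')
    (L₃ : E →L[ℝ] F'' →L[ℝ] F') (L₄ : E' →L[ℝ] E'' →L[ℝ] F'')
    (hL : ∀ x y z, L₂ (L x y) z = L₃ x (L₄ y z)) {h : ℝ → E''}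
    (hg : Integrable g) (hk : Integrable k) (hh : Continuous h) (hhC : ∀ x, ‖h x‖ ≤ C)
    (x : ℝ) : ((g ⋆[L] k) ⋆[L₂] h) x = (g ⋆[L₃] (k ⋆[L₄] h)) x := by
  have hhC' : ∀ x, ‖‖h x‖‖ ≤ C := fun x => (norm_norm _).trans_le (hhC x)
  have hkh := hk.norm.continuous_convolution_of_norm_le (mul ℝ ℝ) hh.norm hhC'
  refine convolution_assoc L L₂ L₃ L₄ hL hg.aestronglyMeasurable hk.aestronglyMeasurable
    hh.aestronglyMeasurable (hg.ae_convolution_exists L hk)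
    (ae_of_all _ <| hk.norm.convolutionExistsAt_of_norm_le _ hh.norm.aestronglyMeasurable hhC')
    (hg.norm.convolutionExistsAt_of_norm_le _ hkh.aestronglyMeasurable
      (hk.norm.norm_convolution_le _ hhC') x)

theorem convolution_integrand_swap_restrict (hg : Integrable g)
    (hk : AEStronglyMeasurable k) (hkC : ∀ x, ‖k x‖ ≤ C) {s : Set ℝ} (hs : volume s ≠ ⊤) :
    Integrable (fun p : ℝ × ℝ => L (g (p.1 - p.2)) (k p.2)) ((volume.restrict s).prod volume) := by
  have hmeas : AEStronglyMeasurable (fun p : ℝ × ℝ => L (g (p.1 - p.2)) (k p.2))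
      ((volume.restrict s).prod volume) := by
    rw [Measure.restrict_prod_eq_prod_univ]
    exact (L.aestronglyMeasurable_comp₂ (hg.aestronglyMeasurable.comp_quasiMeasurePreserving
      (quasiMeasurePreserving_sub volume volume)) hk.comp_snd).restrict
  refine (integrable_prod_iff hmeas).2 ⟨ae_of_all _ fun u => ?_, ?_⟩
  · exact (hg.convolutionExistsAt_of_norm_le L hk hkC u).integrable_swap
  refine (integrableOn_const (C := ‖L‖ * (∫ t, ‖g t‖) * C) hs).mono'
    hmeas.norm.integral_prod_right' (ae_of_all _ fun u => ?_)
  rw [Real.norm_of_nonneg (integral_nonneg fun _ => norm_nonneg _)]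
  calc ∫ τ, ‖L (g (u - τ)) (k τ)‖ ≤ ∫ τ, ‖L‖ * ‖g (u - τ)‖ * C :=
        integral_mono (hg.convolutionExistsAt_of_norm_le L hk hkC u).integrable_swap.norm
          (((hg.comp_sub_left u).norm.const_mul _).mul_const _)
          fun τ => L.le_of_opNorm₂_le_of_le le_rfl le_rfl (hkC τ)
    _ = ‖L‖ * (∫ t, ‖g t‖) * C := by
        rw [integral_mul_const, integral_const_mul, integral_sub_left_eq_self (‖g ·‖)]

end MeasureTheory.Integrable

section Causal

variable {E E' F : Type*} [NormedAddCommGroup E] [NormedSpace ℝ E]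
  [NormedAddCommGroup E'] [NormedSpace ℝ E'] [NormedAddCommGroup F] [NormedSpace ℝ F]
  {r r' : ℝ → E}

theorem setIntegral_Iic_eq_convolution_indicator_Ioi (L : E →L[ℝ] E' →L[ℝ] F) (g : ℝ → E)
    (h : ℝ → E') (t : ℝ) :
    ∫ τ in Iic t, L (g (t - τ)) (h τ) = ((Ioi 0).indicator g ⋆[L] h) t := by
  rw [← setIntegral_congr_set Iio_ae_eq_Iic, ← integral_indicator measurableSet_Iio,
    convolution_eq_swap]
  congr 1 with τ
  by_cases hτ : τ < t <;> simp [hτ, sub_pos]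

theorem integral_Ioc_eq_sub_of_hasDerivWithinAt_Ici [CompleteSpace E]
    (hder : ∀ t ∈ Ici (0 : ℝ), HasDerivWithinAt r (r' t) (Ici 0) t)
    (hcont : ContinuousOn r' (Ici 0)) {p q : ℝ} (hp : 0 ≤ p) (hpq : p ≤ q) :
    ∫ x in Ioc p q, r' x = r q - r p := by
  have hsub : Icc p q ⊆ Ici 0 := fun x hx => hp.trans hx.1
  rw [← intervalIntegral.integral_of_le hpq]
  refine intervalIntegral.integral_eq_sub_of_hasDeriv_right_of_le hpq
    (fun x hx => (hder x (hsub hx)).continuousWithinAt.mono hsub) (fun x hx => ?_)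
    ((hcont.mono (uIcc_of_le hpq ▸ hsub)).intervalIntegrable)
  exact (hder x (hsub (Ioo_subset_Icc_self hx))).mono fun y hy => (hp.trans hx.1.le).trans hy.le

theorem indicator_Ioi_sub_indicator_Ioi_eq [CompleteSpace E]
    (hder : ∀ t ∈ Ici (0 : ℝ), HasDerivWithinAt r (r' t) (Ici 0) t)
    (hcont : ContinuousOn r' (Ici 0)) {a b : ℝ} (hab : a ≤ b) (τ : ℝ) :
    (Ioi 0).indicator r (b - τ) - (Ioi 0).indicator r (a - τ) =
      (∫ u in Ioc a b, (Ioi 0).indicator r' (u - τ)) + (Ico a b).indicator (fun _ => r 0) τ := by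
  have hshift : ∫ u in Ioc a b, (Ioi 0).indicator r' (u - τ) =
      ∫ u in Ioc ((a - τ) ⊔ 0) (b - τ), r' u := by
    rw [← intervalIntegral.integral_of_le hab, intervalIntegral.integral_comp_sub_right,
      intervalIntegral.integral_of_le (by linarith), setIntegral_indicator measurableSet_Ioi,
      Ioc_inter_Ioi]
  rw [hshift]
  rcases le_or_gt b τ with hbτ | hτb
  · rw [Ioc_eq_empty (by simp [hbτ]), Measure.restrict_empty, integral_zero_measure,
      indicator_of_notMem (by simpa using hbτ), indicator_of_notMem (by simp; linarith),
      indicator_of_notMem (fun h => h.2.not_ge hbτ)]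
    simp
  rw [integral_Ioc_eq_sub_of_hasDerivWithinAt_Ici hder hcont le_sup_right (by simp [hab, hτb.le]),
    indicator_of_mem (by simpa using hτb)]
  rcases lt_or_ge τ a with hτa | haτ
  · rw [sup_eq_left.2 (by linarith), indicator_of_mem (by simpa using hτa),
      indicator_of_notMem (fun h => h.1.not_gt hτa), add_zero]
  · rw [sup_eq_right.2 (by linarith), indicator_of_notMem (by simpa using haτ),
      indicator_of_mem (show τ ∈ Ico a b from ⟨haτ, hτb⟩)]
    abel

theorem hasDerivAt_of_sub_eq_intervalIntegral [CompleteSpace F] {v w : ℝ → F}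
    (hw : Continuous w) (h : ∀ a b, a ≤ b → v b - v a = ∫ u in a..b, w u) (t : ℝ) :
    HasDerivAt v (w t) t := by
  have hv : v = fun x => v 0 + ∫ u in 0..x, w u := funext fun x => by
    rcases le_total 0 x with hx | hx
    · rw [← h 0 x hx]; abel
    · rw [intervalIntegral.integral_symm, ← h x 0 hx]; abel
  rw [hv]
  exact (hw.integral_hasStrictDerivAt 0 t).hasDerivAt.const_add _

theorem convolution_indicator_Ioi_sub_eq_intervalIntegral [CompleteSpace E] [CompleteSpace F]
    (L : E →L[ℝ] E' →L[ℝ] F) {f : ℝ → E'} {C : ℝ}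
    (hder : ∀ t ∈ Ici (0 : ℝ), HasDerivWithinAt r (r' t) (Ici 0) t)
    (hcont : ContinuousOn r' (Ici 0)) (hr : IntegrableOn r (Ioi 0))
    (hr' : IntegrableOn r' (Ioi 0)) (hf : Continuous f) (hfC : ∀ x, ‖f x‖ ≤ C) {a b : ℝ}
    (hab : a ≤ b) :
    ((Ioi 0).indicator r ⋆[L] f) b - ((Ioi 0).indicator r ⋆[L] f) a =
      ∫ u in a..b, (L (r 0) (f u) + ((Ioi 0).indicator r' ⋆[L] f) u) := by
  rw [← integrable_indicator_iff measurableSet_Ioi] at hr hr'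
  have hexists := hr.convolutionExistsAt_of_norm_le L hf.aestronglyMeasurable hfC
  have hprod := hr'.convolution_integrand_swap_restrict L hf.aestronglyMeasurable hfC
    (s := Ioc a b) measure_Ioc_lt_top.ne
  have hLf : Continuous fun τ => L (r 0) (f τ) := (L (r 0)).continuous.comp hf
  have hf₀ : Integrable ((Ico a b).indicator fun τ => L (r 0) (f τ)) :=
    (integrable_indicator_iff measurableSet_Ico).2
      (hLf.integrableOn_Icc.mono_set Ico_subset_Icc_self)
  have hpt : ∀ τ, L ((Ioi 0).indicator r (b - τ)) (f τ) - L ((Ioi 0).indicator r (a - τ)) (f τ) =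
      (∫ u in Ioc a b, L ((Ioi 0).indicator r' (u - τ)) (f τ)) +
        (Ico a b).indicator (fun τ => L (r 0) (f τ)) τ := by
    intro τ
    rw [← _root_.sub_apply, ← map_sub, indicator_Ioi_sub_indicator_Ioi_eq hder hcont hab, map_add,
      _root_.add_apply]
    congr 1
    · exact ((L.flip (f τ)).integral_comp_comm (hr'.comp_sub_right τ).integrableOn).symm
    · by_cases hτ : τ ∈ Ico a b <;> simp [hτ]
  calc ((Ioi 0).indicator r ⋆[L] f) b - ((Ioi 0).indicator r ⋆[L] f) a
      = ∫ τ, (L ((Ioi 0).indicator r (b - τ)) (f τ) - L ((Ioi 0).indicator r (a - τ)) (f τ)) := by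
        rw [convolution_eq_swap, convolution_eq_swap,
          integral_sub (hexists b).integrable_swap (hexists a).integrable_swap]
    _ = ∫ τ, ((∫ u in Ioc a b, L ((Ioi 0).indicator r' (u - τ)) (f τ)) +
          (Ico a b).indicator (fun τ => L (r 0) (f τ)) τ) := by simp_rw [hpt]
    _ = (∫ u in Ioc a b, ((Ioi 0).indicator r' ⋆[L] f) u) + ∫ τ in Ico a b, L (r 0) (f τ) := by
        rw [integral_add hprod.integral_prod_right hf₀, ← integral_integral_swap
          (f := fun u τ => L ((Ioi 0).indicator r' (u - τ)) (f τ)) hprod,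
          integral_indicator measurableSet_Ico]
        simp_rw [convolution_eq_swap]
    _ = ∫ u in a..b, (L (r 0) (f u) + ((Ioi 0).indicator r' ⋆[L] f) u) := by
        rw [intervalIntegral.integral_of_le hab,
          integral_add hLf.integrableOn_Ioc
            (hr'.continuous_convolution_of_norm_le L hf hfC).integrableOn_Ioc,
          integral_Ico_eq_integral_Ioc, add_comm]

theorem hasDerivAt_convolution_indicator_Ioi [CompleteSpace E] [CompleteSpace F]
    (L : E →L[ℝ] E' →L[ℝ] F) {f : ℝ → E'} {C : ℝ}
    (hder : ∀ t ∈ Ici (0 : ℝ), HasDerivWithinAt r (r' t) (Ici 0) t)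
    (hcont : ContinuousOn r' (Ici 0)) (hr : IntegrableOn r (Ioi 0))
    (hr' : IntegrableOn r' (Ioi 0)) (hf : Continuous f) (hfC : ∀ x, ‖f x‖ ≤ C) (t : ℝ) :
    HasDerivAt ((Ioi 0).indicator r ⋆[L] f)
      (L (r 0) (f t) + ((Ioi 0).indicator r' ⋆[L] f) t) t :=
  hasDerivAt_of_sub_eq_intervalIntegral (((L (r 0)).continuous.comp hf).add
      (((integrable_indicator_iff measurableSet_Ioi).2 hr').continuous_convolution_of_norm_le
        L hf hfC))
    (fun _ _ hab =>
      convolution_indicator_Ioi_sub_eq_intervalIntegral L hder hcont hr hr' hf hfC hab) t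

end Causal

namespace Matrix

variable {m n : Type*} [Fintype m] [Fintype n]

def mulVecL : Matrix m n ℝ →L[ℝ] (n → ℝ) →L[ℝ] m → ℝ :=
  LinearMap.toContinuousLinearMap
    (LinearMap.toContinuousLinearMap.toLinearMap ∘ₗ mulVecBilin ℝ ℝ)

@[simp]
theorem mulVecL_apply (A : Matrix m n ℝ) (x : n → ℝ) : mulVecL A x = A *ᵥ x := rfl

theorem mulVecL_mul {l : Type*} [Fintype l] (A : Matrix l m ℝ) (B : Matrix m n ℝ) (x : n → ℝ) :
    mulVecL (A * B) x = mulVecL A (mulVecL B x) := by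
  simp [mulVec_mulVec]

end Matrix

namespace IsDiffResolvent

variable {d : ℕ} {D : Matrix (Fin d) (Fin d) ℝ} {γ r r' : ℝ → Matrix (Fin d) (Fin d) ℝ}

theorem indicator_deriv_eq (hr : IsDiffResolvent D γ r r') (t : ℝ) :
    (Ioi 0).indicator r' t =
      -(D * (Ioi 0).indicator r t) - ((Ioi 0).indicator γ ⋆[mul ℝ _] (Ioi 0).indicator r) t := by
  rw [← posConvolution_eq_convolution_indicator γ r (mul ℝ _) volume, posConvolution]
  by_cases ht : 0 < t
  · simp only [indicator_of_mem (mem_Ioi.2 ht), hr.eq_left t ht.le,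
      ContinuousLinearMap.mul_apply']
    simpa using intervalIntegral.integral_comp_sub_left (fun s => γ s * r (t - s)) t
      (a := 0) (b := t)
  · simp [ht]

theorem integrableOn_deriv (hr : IsDiffResolvent D γ r r') (hγ : IntegrableOn γ (Ioi 0))
    (hrL1 : IntegrableOn r (Ioi 0)) : IntegrableOn r' (Ioi 0) := by
  rw [← integrable_indicator_iff measurableSet_Ioi] at hγ hrL1 ⊢
  rw [funext hr.indicator_deriv_eq]
  exact ((mul ℝ _ D).integrable_comp hrL1).neg.sub (hγ.integrable_convolution _ hrL1)

theorem convolution_deriv_eq (hr : IsDiffResolvent D γ r r') (hγ : IntegrableOn γ (Ioi 0))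
    (hrL1 : IntegrableOn r (Ioi 0)) {f : ℝ → Fin d → ℝ} {C : ℝ} (hf : Continuous f)
    (hfC : ∀ x, ‖f x‖ ≤ C) (t : ℝ) :
    ((Ioi 0).indicator r' ⋆[mulVecL] f) t =
      -(D *ᵥ ((Ioi 0).indicator r ⋆[mulVecL] f) t) -
        ((Ioi 0).indicator γ ⋆[mulVecL] ((Ioi 0).indicator r ⋆[mulVecL] f)) t := by
  rw [← integrable_indicator_iff measurableSet_Ioi] at hγ hrL1
  rw [← hγ.convolution_assoc_of_norm_le (mul ℝ _) mulVecL mulVecL mulVecL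
    (fun A B x => mulVecL_mul A B x) hrL1 hf hfC t]
  have hr₀f := hrL1.convolutionExistsAt_of_norm_le mulVecL hf.aestronglyMeasurable hfC t
  have hγr₀f := (hγ.integrable_convolution (mul ℝ _) hrL1).convolutionExistsAt_of_norm_le
    mulVecL hf.aestronglyMeasurable hfC t
  rw [convolution_def, convolution_def, convolution_def]
  simp only [hr.indicator_deriv_eq, map_sub, map_neg, _root_.sub_apply, _root_.neg_apply,
    mulVecL_mul]
  have hDr₀f : Integrable fun s => -mulVecL D (mulVecL ((Ioi 0).indicator r s) (f (t - s))) :=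
    ((mulVecL D).integrable_comp hr₀f).neg
  rw [integral_sub hDr₀f hγr₀f, integral_neg,
    (mulVecL D).integral_comp_comm hr₀f, mulVecL_apply]

end IsDiffResolvent

theorem resolvent_solves_GLE_infinite_horizon_general {d : ℕ}
    (D : Matrix (Fin d) (Fin d) ℝ)
    (γ r r' : ℝ → Matrix (Fin d) (Fin d) ℝ)
    (hγ : IntegrableOn γ (Ioi 0))
    (hr : IsDiffResolvent D γ r r')
    (hrL1 : IntegrableOn r (Ioi 0))
    (f : ℝ → Fin d → ℝ) (hfc : Continuous f) (hfb : ∃ C : ℝ, ∀ t : ℝ, ‖f t‖ ≤ C) :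
    letI v : ℝ → Fin d → ℝ := fun t => ∫ τ in Iic t, r (t - τ) *ᵥ f τ
    (∃ C : ℝ, ∀ t : ℝ, ‖v t‖ ≤ C) ∧
    (∀ t : ℝ, HasDerivAt v
      (-(D *ᵥ v t) - (∫ s in Iic t, γ (t - s) *ᵥ v s) + f t) t) ∧
    Continuous (fun t => -(D *ᵥ v t) - (∫ s in Iic t, γ (t - s) *ᵥ v s) + f t) := by
  obtain ⟨C, hfC⟩ := hfb
  have hv : (fun t => ∫ τ in Iic t, r (t - τ) *ᵥ f τ) = (Ioi 0).indicator r ⋆[mulVecL] f :=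
    funext (setIntegral_Iic_eq_convolution_indicator_Ioi mulVecL r f)
  rw [hv]
  set v := (Ioi 0).indicator r ⋆[mulVecL] f
  have hγv : ∀ t, ∫ s in Iic t, γ (t - s) *ᵥ v s = ((Ioi 0).indicator γ ⋆[mulVecL] v) t :=
    setIntegral_Iic_eq_convolution_indicator_Ioi mulVecL γ v
  have hv' : ∀ t, -(D *ᵥ v t) - (∫ s in Iic t, γ (t - s) *ᵥ v s) + f t =
      mulVecL (r 0) (f t) + ((Ioi 0).indicator r' ⋆[mulVecL] f) t := fun t => by
    rw [hγv, hr.convolution_deriv_eq hγ hrL1 hfc hfC, hr.init, mulVecL_apply, one_mulVec]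
    abel
  have hr' := hr.integrableOn_deriv hγ hrL1
  simp only [hv']
  refine ⟨⟨_, ((integrable_indicator_iff measurableSet_Ioi).2 hrL1).norm_convolution_le _ hfC⟩,
    hasDerivAt_convolution_indicator_Ioi _ hr.hasDeriv hr.contDeriv hrL1 hr' hfc hfC, ?_⟩
  exact ((mulVecL (r 0)).continuous.comp hfc).add
    (((integrable_indicator_iff measurableSet_Ioi).2 hr').continuous_convolution_of_norm_le _
      hfc hfC)

/-- for an integrable resolvent and a bounded continuous forcing `f`,
`v(t) = ∫_{-∞}^t r(t-τ) f(τ) dτ` is a bounded continuously differentiable solution of the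
generalized Langevin equation with infinite time horizon. -/
theorem resolvent_solves_GLE_infinite_horizon {d : ℕ} (hd : 1 ≤ d)
    (D : Matrix (Fin d) (Fin d) ℝ)
    (γ r r' : ℝ → Matrix (Fin d) (Fin d) ℝ)
    (hγ : IntegrableOn γ (Ioi 0))
    (hr : IsDiffResolvent D γ r r')
    (hrL1 : IntegrableOn r (Ioi 0))
    (f : ℝ → Fin d → ℝ) (hfc : Continuous f) (hfb : ∃ C : ℝ, ∀ t : ℝ, ‖f t‖ ≤ C) :
    letI v : ℝ → Fin d → ℝ := fun t => ∫ τ in Iic t, r (t - τ) *ᵥ f τ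
    (∃ C : ℝ, ∀ t : ℝ, ‖v t‖ ≤ C) ∧
    (∀ t : ℝ, HasDerivAt v
      (-(D *ᵥ v t) - (∫ s in Iic t, γ (t - s) *ᵥ v s) + f t) t) ∧
    Continuous (fun t => -(D *ᵥ v t) - (∫ s in Iic t, γ (t - s) *ᵥ v s) + f t) :=
  resolvent_solves_GLE_infinite_horizon_general D γ r r' hγ hr hrL1 f hfc hfb
end
end

section
/- Let d ≥ 1, D ∈ ℝ^{d×d}, let γ : (0,∞) → ℝ^{d×d} be Bochner integrable, and let r be the differential resolvent of γ with drift matrix D; assume r is bounded on [0,∞). Let h : [0,∞) → ℝ^{d×d} be measurable and bounded. If ∫₀ᵗ r(t−τ) h(τ) dτ = 0 for every t ≥ 0, then h(t) = 0 for almost every t ≥ 0. -/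
/-!
Write `(f ⋆ g)(t) = ∫₀ᵗ f(t - τ) g(τ) dτ`. This causal convolution is associative (Fubini on the
triangle `0 ≤ τ ≤ u ≤ t`), so convolving the resolvent equation `r' = -D r - γ ⋆ r` with `h` gives
`r' ⋆ h = -D (r ⋆ h) - γ ⋆ (r ⋆ h) = 0`. Since `1 ⋆ r' = r - I`, associativity also gives
`r ⋆ h = 1 ⋆ h + 1 ⋆ (r' ⋆ h)`, hence every primitive `∫₀ᵗ h` vanishes and `h = 0` a.e. by the
Lebesgue differentiation theorem. No Laplace transform is needed.
-/

open MeasureTheory Matrix Set Filter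
open scoped Matrix.Norms.L2Operator Real Topology ComplexOrder

noncomputable section

section RealIntegrals

variable {E : Type*} [NormedAddCommGroup E] [NormedSpace ℝ E]

def triangle (t : ℝ) : Set (ℝ × ℝ) := {p | 0 ≤ p.2 ∧ p.2 ≤ p.1 ∧ p.1 ≤ t}

theorem measurableSet_triangle (t : ℝ) : MeasurableSet (triangle t) := by
  unfold triangle; measurability

theorem triangle_subset_Icc_prod_Icc (t : ℝ) : triangle t ⊆ Icc 0 t ×ˢ Icc 0 t :=
  fun _ ⟨h0, hτu, hut⟩ => ⟨⟨h0.trans hτu, hut⟩, ⟨h0, hτu.trans hut⟩⟩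

theorem integral_integral_swap_triangle {F : ℝ → ℝ → E} {t : ℝ} (ht : 0 ≤ t)
    (hF : IntegrableOn (Function.uncurry F) (triangle t)) :
    ∫ u in (0 : ℝ)..t, ∫ τ in (0 : ℝ)..u, F u τ = ∫ τ in (0 : ℝ)..t, ∫ u in τ..t, F u τ := by
  set G := (triangle t).indicator (Function.uncurry F)
  have hG : Integrable (Function.uncurry fun u τ => G (u, τ)) (volume.prod volume) := by
    rw [← Measure.volume_eq_prod]
    exact (integrable_indicator_iff (measurableSet_triangle t)).2 hF
  have hu : ∀ u, ∫ τ, G (u, τ) = (Icc 0 t).indicator (fun u => ∫ τ in (0 : ℝ)..u, F u τ) u := by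
    intro u
    by_cases hu : u ∈ Icc 0 t
    · rw [indicator_of_mem hu, intervalIntegral.integral_of_le hu.1,
        ← integral_Icc_eq_integral_Ioc, ← integral_indicator measurableSet_Icc]
      congr 1; ext τ
      simp only [G, indicator, triangle, mem_ofPred_eq, mem_Icc, Function.uncurry_apply_pair]
      grind
    · rw [indicator_of_notMem hu]
      refine integral_eq_zero_of_ae (ae_of_all _ fun τ => indicator_of_notMem ?_ _)
      simp only [triangle, mem_ofPred_eq, mem_Icc] at hu ⊢
      grind
  have hτ : ∀ τ, ∫ u, G (u, τ) = (Icc 0 t).indicator (fun τ => ∫ u in τ..t, F u τ) τ := by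
    intro τ
    by_cases hτ : τ ∈ Icc 0 t
    · rw [indicator_of_mem hτ, intervalIntegral.integral_of_le hτ.2,
        ← integral_Icc_eq_integral_Ioc, ← integral_indicator measurableSet_Icc]
      congr 1; ext u
      simp only [G, indicator, triangle, mem_ofPred_eq, mem_Icc, Function.uncurry_apply_pair]
      grind
    · rw [indicator_of_notMem hτ]
      refine integral_eq_zero_of_ae (ae_of_all _ fun u => indicator_of_notMem ?_ _)
      simp only [triangle, mem_ofPred_eq, mem_Icc] at hτ ⊢
      grind
  have hswap := integral_integral_swap hG
  simp only [hu, hτ, integral_indicator measurableSet_Icc] at hswap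
  rwa [intervalIntegral.integral_of_le ht, intervalIntegral.integral_of_le ht,
    ← integral_Icc_eq_integral_Ioc, ← integral_Icc_eq_integral_Ioc]

theorem ae_eq_zero_of_forall_intervalIntegral_eq_zero [CompleteSpace E] {f : ℝ → E}
    (hf : ∀ t, 0 ≤ t → IntervalIntegrable f volume 0 t)
    (h : ∀ t, 0 ≤ t → ∫ τ in (0 : ℝ)..t, f τ = 0) :
    ∀ᵐ t ∂volume.restrict (Ioi 0), f t = 0 := by
  have hderiv := ae_all_iff.2 fun n : ℕ => (hf n n.cast_nonneg).ae_hasDerivAt_integral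
  rw [ae_restrict_iff' measurableSet_Ioi]
  filter_upwards [hderiv] with x hx (hx0 : 0 < x)
  obtain ⟨n, hn⟩ := exists_nat_gt x
  have hxn : x ∈ uIcc 0 (n : ℝ) := by rw [uIcc_of_le n.cast_nonneg]; exact ⟨hx0.le, hn.le⟩
  have hzero : (fun y => ∫ τ in (0 : ℝ)..y, f τ) =ᶠ[𝓝 x] fun _ => 0 :=
    eventually_of_mem (Ioi_mem_nhds hx0) fun y hy => h y (le_of_lt hy)
  exact ((hx n hxn 0 left_mem_uIcc).congr_of_eventuallyEq hzero.symm).unique (hasDerivAt_const x 0)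

theorem intervalIntegral.integral_eq_zero_of_forall_mem_Icc {f : ℝ → E} {t : ℝ} (ht : 0 ≤ t)
    (hf : ∀ x ∈ Icc 0 t, f x = 0) : ∫ x in (0 : ℝ)..t, f x = 0 := by
  rw [intervalIntegral.integral_congr (g := fun _ => 0) (by rwa [uIcc_of_le ht]),
    intervalIntegral.integral_zero]

end RealIntegrals

theorem IntervalIntegrable.comp_sub_left_self {E : Type*} [NormedAddCommGroup E] {f : ℝ → E}
    {t : ℝ} (hf : IntervalIntegrable f volume 0 t) :
    IntervalIntegrable (fun u => f (t - u)) volume 0 t := by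
  simpa using (hf.comp_sub_left t).symm

section NormedRing

variable {A : Type*} [NormedRing A] {f g k : ℝ → A} {t : ℝ}

theorem intervalIntegrable_causalConv_integrand (ht : 0 ≤ t) (hf : ContinuousOn f (Icc 0 t))
    (hg : IntervalIntegrable g volume 0 t) :
    IntervalIntegrable (fun τ => f (t - τ) * g τ) volume 0 t := by
  refine hg.continuousOn_mul (hf.comp (by fun_prop) fun τ hτ => ?_)
  rw [uIcc_of_le ht] at hτ
  constructor <;> linarith [hτ.1, hτ.2]

theorem integrableOn_triangle_mul (ht : 0 ≤ t) (hf : IntervalIntegrable f volume 0 t)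
    (hg : ContinuousOn g (Icc 0 t)) (hk : IntervalIntegrable k volume 0 t) :
    IntegrableOn (fun p : ℝ × ℝ => f (t - p.1) * (g (p.1 - p.2) * k p.2)) (triangle t) := by
  have hf' : IntegrableOn (fun u => f (t - u)) (Icc 0 t) :=
    (intervalIntegrable_iff_integrableOn_Icc_of_le ht).1 hf.comp_sub_left_self
  rw [intervalIntegrable_iff_integrableOn_Icc_of_le ht] at hk
  obtain ⟨C, hC⟩ := isCompact_Icc.exists_bound_of_continuousOn hg
  have hdiff : MapsTo (fun p : ℝ × ℝ => p.1 - p.2) (triangle t) (Icc 0 t) :=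
    fun p ⟨h0, hτu, hut⟩ => ⟨sub_nonneg.2 hτu, by linarith⟩
  have hbound : IntegrableOn (fun p : ℝ × ℝ => C * (‖f (t - p.1)‖ * ‖k p.2‖)) (triangle t) := by
    refine IntegrableOn.mono_set ?_ (triangle_subset_Icc_prod_Icc t)
    rw [IntegrableOn, Measure.volume_eq_prod, ← Measure.prod_restrict]
    exact (hf'.norm.mul_prod hk.norm).const_mul C
  refine hbound.mono' ?_ ?_
  · have hfst : Measure.QuasiMeasurePreserving Prod.fst (volume.restrict (triangle t))
        (volume.restrict (Icc 0 t)) := by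
      rw [Measure.volume_eq_prod]
      exact Measure.quasiMeasurePreserving_fst.restrict fun p hp =>
        (triangle_subset_Icc_prod_Icc t hp).1
    have hsnd : Measure.QuasiMeasurePreserving Prod.snd (volume.restrict (triangle t))
        (volume.restrict (Icc 0 t)) := by
      rw [Measure.volume_eq_prod]
      exact Measure.quasiMeasurePreserving_snd.restrict fun p hp =>
        (triangle_subset_Icc_prod_Icc t hp).2
    exact (hf'.aestronglyMeasurable.comp_quasiMeasurePreserving hfst).mul
      (((hg.comp (by fun_prop) hdiff).aestronglyMeasurable (measurableSet_triangle t)).mul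
        (hk.aestronglyMeasurable.comp_quasiMeasurePreserving hsnd))
  · filter_upwards [ae_restrict_mem (measurableSet_triangle t)] with p hp
    calc ‖f (t - p.1) * (g (p.1 - p.2) * k p.2)‖
        ≤ ‖f (t - p.1)‖ * (‖g (p.1 - p.2)‖ * ‖k p.2‖) :=
          (norm_mul_le _ _).trans (mul_le_mul_of_nonneg_left (norm_mul_le _ _) (norm_nonneg _))
      _ ≤ ‖f (t - p.1)‖ * (C * ‖k p.2‖) := by gcongr; exact hC _ (hdiff hp)
      _ = C * (‖f (t - p.1)‖ * ‖k p.2‖) := by ring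

end NormedRing

section CausalConv

variable {A : Type*} [NormedRing A] [NormedAlgebra ℝ A]

def causalConv (f g : ℝ → A) (t : ℝ) : A :=
  ∫ τ in (0 : ℝ)..t, f (t - τ) * g τ

variable [CompleteSpace A] {f g k : ℝ → A} {t : ℝ}

theorem intervalIntegral.integral_const_mul_of_intervalIntegrable {a b : ℝ}
    (hf : IntervalIntegrable f volume a b) (c : A) :
    ∫ x in a..b, c * f x = c * ∫ x in a..b, f x :=
  (ContinuousLinearMap.mul ℝ A c).intervalIntegral_comp_comm hf

theorem intervalIntegral.integral_mul_const_of_intervalIntegrable {a b : ℝ}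
    (hf : IntervalIntegrable f volume a b) (c : A) :
    ∫ x in a..b, f x * c = (∫ x in a..b, f x) * c :=
  ((ContinuousLinearMap.mul ℝ A).flip c).intervalIntegral_comp_comm hf

theorem causalConv_assoc (ht : 0 ≤ t) (hf : IntervalIntegrable f volume 0 t)
    (hg : ContinuousOn g (Icc 0 t)) (hk : IntervalIntegrable k volume 0 t) :
    causalConv (causalConv f g) k t = causalConv f (causalConv g k) t := by
  symm
  calc causalConv f (causalConv g k) t
      = ∫ u in (0 : ℝ)..t, ∫ τ in (0 : ℝ)..u, f (t - u) * (g (u - τ) * k τ) := by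
        refine intervalIntegral.integral_congr fun u hu => ?_
        rw [uIcc_of_le ht] at hu
        have hk' : IntervalIntegrable k volume 0 u :=
          hk.mono_set (by rw [uIcc_of_le ht, uIcc_of_le hu.1]; exact Icc_subset_Icc_right hu.2)
        exact (intervalIntegral.integral_const_mul_of_intervalIntegrable
          (intervalIntegrable_causalConv_integrand hu.1 (hg.mono (Icc_subset_Icc_right hu.2)) hk')
          _).symm
    _ = ∫ τ in (0 : ℝ)..t, ∫ u in τ..t, f (t - u) * (g (u - τ) * k τ) :=
        integral_integral_swap_triangle ht (integrableOn_triangle_mul ht hf hg hk)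
    _ = causalConv (causalConv f g) k t := by
        refine intervalIntegral.integral_congr fun τ hτ => ?_
        rw [uIcc_of_le ht] at hτ
        have hfg : IntervalIntegrable (fun u => f (t - u) * g (u - τ)) volume τ t := by
          refine IntervalIntegrable.mul_continuousOn ?_ (hg.comp (by fun_prop) fun u hu => ?_)
          · refine hf.comp_sub_left_self.mono_set ?_
            rw [uIcc_of_le ht, uIcc_of_le hτ.2]
            exact Icc_subset_Icc_left hτ.1
          · rw [uIcc_of_le hτ.2] at hu
            constructor <;> linarith [hu.1, hu.2, hτ.1]
        simp only [← mul_assoc]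
        rw [intervalIntegral.integral_mul_const_of_intervalIntegrable hfg, causalConv,
          ← sub_self τ, ← intervalIntegral.integral_comp_sub_right (fun σ => f (t - τ - σ) * g σ) τ]
        simp only [sub_sub_sub_cancel_right]

theorem causalConv_eq_mul_integral_add_integral_causalConv {r r' : ℝ → A}
    (hr : ∀ x ∈ Ici (0 : ℝ), HasDerivWithinAt r (r' x) (Ici 0) x) (hr' : ContinuousOn r' (Ici 0))
    (hk : IntervalIntegrable k volume 0 t) (ht : 0 ≤ t) :
    causalConv r k t = r 0 * (∫ τ in (0 : ℝ)..t, k τ) + ∫ u in (0 : ℝ)..t, causalConv r' k u := by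
  have hrc : ContinuousOn r (Icc 0 t) := fun x hx =>
    (hr x hx.1).continuousWithinAt.mono Icc_subset_Ici_self
  have hr'c : ContinuousOn r' (Icc 0 t) := hr'.mono Icc_subset_Ici_self
  have hFTC : EqOn (causalConv (fun _ => 1) r') (fun x => r x - r 0) (Icc 0 t) := fun x hx => by
    simp only [causalConv, one_mul]
    exact intervalIntegral.integral_eq_sub_of_hasDerivAt_of_le hx.1
      (hrc.mono (Icc_subset_Icc_right hx.2))
      (fun y hy => (hr y hy.1.le).hasDerivAt (Ici_mem_nhds hy.1))
      ((hr'c.mono (Icc_subset_Icc_right hx.2)).intervalIntegrable_of_Icc hx.1)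
  calc causalConv r k t
      = ∫ τ in (0 : ℝ)..t, (r 0 * k τ + causalConv (fun _ => 1) r' (t - τ) * k τ) := by
        refine intervalIntegral.integral_congr fun τ hτ => ?_
        rw [uIcc_of_le ht] at hτ
        rw [hFTC ⟨sub_nonneg.2 hτ.2, by linarith [hτ.1]⟩, sub_mul, add_sub_cancel]
    _ = r 0 * (∫ τ in (0 : ℝ)..t, k τ) + causalConv (causalConv (fun _ => 1) r') k t := by
        have h1r' : ContinuousOn (causalConv (fun _ => 1) r') (Icc 0 t) :=
          (hrc.sub continuousOn_const).congr hFTC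
        rw [intervalIntegral.integral_add (hk.const_mul _)
          (intervalIntegrable_causalConv_integrand ht h1r' hk),
          intervalIntegral.integral_const_mul_of_intervalIntegrable hk]
        rfl
    _ = r 0 * (∫ τ in (0 : ℝ)..t, k τ) + ∫ u in (0 : ℝ)..t, causalConv r' k u := by
        rw [causalConv_assoc ht intervalIntegrable_const hr'c hk]
        simp only [causalConv, one_mul]

end CausalConv

theorem IsDiffResolvent.causalConv_deriv {d : ℕ} {D : Matrix (Fin d) (Fin d) ℝ}
    {γ r r' k : ℝ → Matrix (Fin d) (Fin d) ℝ} {t : ℝ} (hr : IsDiffResolvent D γ r r')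
    (hγ : IntervalIntegrable γ volume 0 t) (hk : IntervalIntegrable k volume 0 t) (ht : 0 ≤ t) :
    causalConv r' k t = -(D * causalConv r k t) - causalConv γ (causalConv r k) t := by
  have hrc : ContinuousOn r (Icc 0 t) := fun x hx =>
    (hr.hasDeriv x hx.1).continuousWithinAt.mono Icc_subset_Ici_self
  have hr'k := intervalIntegrable_causalConv_integrand ht (hr.contDeriv.mono Icc_subset_Ici_self) hk
  have hrk := intervalIntegrable_causalConv_integrand ht hrc hk
  have hγrk : causalConv (causalConv γ r) k t = -(causalConv r' k t + D * causalConv r k t) := by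
    rw [causalConv, causalConv, causalConv,
      ← intervalIntegral.integral_const_mul_of_intervalIntegrable hrk,
      ← intervalIntegral.integral_add hr'k (hrk.const_mul D), ← intervalIntegral.integral_neg]
    refine intervalIntegral.integral_congr fun τ hτ => ?_
    rw [uIcc_of_le ht] at hτ
    simp only [hr.eq_left (t - τ) (sub_nonneg.2 hτ.2)]
    noncomm_ring
  rw [← causalConv_assoc ht hγ hrc hk, hγrk]
  abel

theorem resolvent_convolution_injective_general {d : ℕ}
    (D : Matrix (Fin d) (Fin d) ℝ)
    (γ r r' : ℝ → Matrix (Fin d) (Fin d) ℝ)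
    (hγ : IntegrableOn γ (Ioi 0))
    (hr : IsDiffResolvent D γ r r')
    (h : ℝ → Matrix (Fin d) (Fin d) ℝ)
    (hmeas : StronglyMeasurable h)
    (hbd : ∃ C : ℝ, ∀ t ∈ Ici (0 : ℝ), ‖h t‖ ≤ C)
    (hconv : ∀ t ∈ Ici (0 : ℝ), (∫ τ in (0 : ℝ)..t, r (t - τ) * h τ) = 0) :
    ∀ᵐ t ∂(volume.restrict (Ioi (0 : ℝ))), h t = 0 := by
  obtain ⟨C, hC⟩ := hbd
  have hh : ∀ t ∈ Ici (0 : ℝ), IntervalIntegrable h volume 0 t := fun t ht =>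
    (intervalIntegrable_iff_integrableOn_Ioc_of_le ht).2 <|
      Measure.integrableOn_of_bounded measure_Ioc_lt_top.ne hmeas.aestronglyMeasurable
        (ae_restrict_of_forall_mem measurableSet_Ioc fun x hx => hC x hx.1.le)
  have hγt : ∀ t ∈ Ici (0 : ℝ), IntervalIntegrable γ volume 0 t := fun t ht =>
    (intervalIntegrable_iff_integrableOn_Ioc_of_le ht).2 (hγ.mono_set Ioc_subset_Ioi_self)
  have hr'h : ∀ t ∈ Ici (0 : ℝ), causalConv r' h t = 0 := fun t ht => by
    have hγrh : causalConv γ (causalConv r h) t = 0 :=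
      intervalIntegral.integral_eq_zero_of_forall_mem_Icc ht fun τ hτ => by
        simp only [causalConv, hconv τ hτ.1, mul_zero]
    rw [hr.causalConv_deriv (hγt t ht) (hh t ht) ht, hγrh, causalConv, hconv t ht, mul_zero,
      neg_zero, sub_zero]
  refine ae_eq_zero_of_forall_intervalIntegral_eq_zero hh fun t ht => ?_
  have hr'h_int : ∫ u in (0 : ℝ)..t, causalConv r' h u = 0 :=
    intervalIntegral.integral_eq_zero_of_forall_mem_Icc ht fun u hu => hr'h u hu.1
  have hrh := causalConv_eq_mul_integral_add_integral_causalConv hr.hasDeriv hr.contDeriv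
    (hh t ht) ht
  rwa [hr'h_int, add_zero, hr.init, one_mul, causalConv, hconv t ht, eq_comm] at hrh

/-- for a bounded resolvent `r`, the convolution operator `h ↦ r * h` is
injective on bounded measurable functions: if `∫₀ᵗ r(t-τ) h(τ) dτ = 0` for every `t ≥ 0`,
then `h = 0` almost everywhere on `[0,∞)`. -/
theorem resolvent_convolution_injective {d : ℕ} (hd : 1 ≤ d)
    (D : Matrix (Fin d) (Fin d) ℝ)
    (γ r r' : ℝ → Matrix (Fin d) (Fin d) ℝ)
    (hγ : IntegrableOn γ (Ioi 0))
    (hr : IsDiffResolvent D γ r r')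
    (hrb : ∃ C : ℝ, ∀ t ∈ Ici (0 : ℝ), ‖r t‖ ≤ C)
    (h : ℝ → Matrix (Fin d) (Fin d) ℝ)
    (hmeas : StronglyMeasurable h)
    (hbd : ∃ C : ℝ, ∀ t ∈ Ici (0 : ℝ), ‖h t‖ ≤ C)
    (hconv : ∀ t ∈ Ici (0 : ℝ), (∫ τ in (0 : ℝ)..t, r (t - τ) * h τ) = 0) :
    ∀ᵐ t ∂(volume.restrict (Ioi (0 : ℝ))), h t = 0 :=
  resolvent_convolution_injective_general D γ r r' hγ hr h hmeas hbd hconv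
end
end
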